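/- Let X be a measurable space equipped with a sigma-finite measure lambda, V : X -> [1,infinity) measurable, and let g be a balancing function that is twice differentiable and non-decreasing with g' and g'' bounded. Let q be a bounded positive proposal density, and let mu, nu be probability measures with everywhere positive bounded densities with respect to lambda satisfying ∫ V dmu < infinity and ∫ V dnu < infinity. Let rho be a probability measure with density such that sup_x rho(x)/mu(x)^2 < infinity and sup_x rho(x)/nu(x)^2 < infinity, and let f be measurable with ||f||_V < infinity. Then the map t |-> P_{mu_t}(rho,f), where P_{mu_t} is the Hastings kernel with invariant distribution mu_t, has right derivative at t = 0 equal to ∫ (nu(y) - mu(y)) D(y) lambda(dy), where D(y) := ∫ (f(y) - f(z)) (rho(z)/mu(z)) g'(r_mu(z,y)) q(y,z) lambda(dz) - (rho(y)/mu(y)^2) ∫ (f(z) - f(y)) q(z,y) g'(r_mu(y,z)) mu(z) lambda(dz). -/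

import Mathlib

/-!
Write `P_{μ_t}(x, f) = f(x) + ∫ (f(y) - f(x)) g(r_t(x,y)) q(x,y) λ(dy)`, so that
`P_{μ_t}(ρ, f) = ρ(f) + ∬ Φ_t`, where `Φ_t(x,y) = ρ(x) (f(y) - f(x)) g(r_t(x,y)) q(x,y)` is the flow
out of `x` into `y`. The balancing identity gives `g(r) ≤ r`, hence
`g(r_t(x,y)) q(x,y) ≤ μ_t(y) q(y,x) / μ_t(x)`, which makes every term integrable.

Along the mixture, `r_t(x,y) - r_0(x,y) = t q(y,x) (ν(y)μ(x) - μ(y)ν(x)) / (q(x,y) μ_t(x) μ(x))`.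
Since `g` is Lipschitz on `(0,∞)`, `μ_t ≥ μ/2` for `t ≤ 1/2` and `ρ ≤ C μ²`, this bounds
`|Φ_t - Φ_0|` by `t` times a multiple of `(|f(x)| + |f(y)|) (μ + ν)(x) (μ + ν)(y)`, which is
integrable on `X × X` because `‖f‖_V < ∞`. Dominated convergence then differentiates under the
integral, and splitting the derivative of `Φ_t` into the parts carrying `ν(y) - μ(y)` and
`ν(x) - μ(x)` and applying Fubini to each gives the formula for `D`.
-/

open MeasureTheory ProbabilityTheory

/-- The Hastings ratio `r_μ(x,y) = μ(y)q(y,x) / (μ(x)q(x,y))` for a target density `p`. -/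
noncomputable def hastingsRatio {X : Type*} (q : X → X → ℝ) (p : X → ℝ) (x y : X) : ℝ :=
  p y * q y x / (p x * q x y)

/-- The Hastings kernel with balancing function `g`, proposal density `q` and invariant
density `p`, applied to starting point `x` and test function `f`:
`P_μ(x,f) = ∫ f(y) g(r_μ(x,y)) q(x,y) λ(dy) + f(x) (1 - ∫ g(r_μ(x,y)) q(x,y) λ(dy))`. -/
noncomputable def hastingsKernelFun {X : Type*} [MeasurableSpace X] (lam : Measure X)
    (g : ℝ → ℝ) (q : X → X → ℝ) (p : X → ℝ) (x : X) (f : X → ℝ) : ℝ :=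
  (∫ y, f y * g (hastingsRatio q p x y) * q x y ∂lam)
    + f x * (1 - ∫ y, g (hastingsRatio q p x y) * q x y ∂lam)

open Set Filter Topology

lemma div_le_mul_add_of_le_mul_sq {a b c d : ℝ} (ha : 0 ≤ a) (hb : 0 < b) (hd : 0 ≤ d)
    (h : a ≤ c * b ^ 2) : a / b ≤ c * (b + d) := by
  have hc : 0 ≤ c := nonneg_of_mul_nonneg_left (ha.trans h) (by positivity)
  rw [div_le_iff₀ hb]
  nlinarith [mul_nonneg hc hd]

lemma abs_sub_le_of_hasDerivAt_Ioi {g g' : ℝ → ℝ} {c : ℝ}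
    (hg' : ∀ u, 0 < u → HasDerivAt g (g' u) u) (hc : ∀ u, 0 < u → |g' u| ≤ c)
    {a b : ℝ} (ha : 0 < a) (hb : 0 < b) : |g b - g a| ≤ c * |b - a| := by
  simpa [Real.norm_eq_abs] using (convex_Ioi 0).norm_image_sub_le_of_norm_hasDerivWithin_le
    (fun u hu => (hg' u hu).hasDerivWithinAt) (fun u hu => hc u hu) ha hb

lemma ContinuousOn.measurable_comp_of_pos {α : Type*} [MeasurableSpace α] {φ : ℝ → ℝ}
    (hφ : ContinuousOn φ (Ioi 0)) {r : α → ℝ} (hr : Measurable r) (hpos : ∀ z, 0 < r z) :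
    Measurable fun z => φ (r z) :=
  hφ.domRestrict.measurable.comp (hr.subtype_mk (h := hpos))

section Integration

variable {α : Type*} [MeasurableSpace α] {μ : Measure α}

lemma MeasureTheory.Integrable.of_abs_sub_le {f g G : α → ℝ} (hf : Integrable f μ)
    (hG : Integrable G μ) (hg : AEStronglyMeasurable g μ) (h : ∀ᵐ z ∂μ, |g z - f z| ≤ G z) :
    Integrable g μ :=
  (hf.norm.add hG).mono' hg <| h.mono fun z hz => by
    simp only [Real.norm_eq_abs, Pi.add_apply]
    linarith [abs_sub_abs_le_abs_sub (g z) (f z)]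

lemma integrable_abs_mul_of_abs_le {V s f : α → ℝ} {c : ℝ}
    (hVs : Integrable (fun x => V x * s x) μ) (hsm : Measurable s) (hs : ∀ x, 0 ≤ s x)
    (hfm : Measurable f) (hf : ∀ x, |f x| ≤ c * V x) :
    Integrable (fun x => |f x| * s x) μ :=
  (hVs.const_mul c).mono' (hfm.abs.mul hsm).aestronglyMeasurable <| ae_of_all _ fun x => by
    rw [Real.norm_eq_abs, abs_of_nonneg (mul_nonneg (abs_nonneg _) (hs x)), ← mul_assoc]
    exact mul_le_mul_of_nonneg_right (hf x) (hs x)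

theorem hasDerivWithinAt_integral_Ici_of_dominated {F : ℝ → α → ℝ} {F' G : α → ℝ} {δ : ℝ}
    (hδ : 0 < δ) (hF_int : ∀ t ∈ Ico 0 δ, Integrable (F t) μ) (hG : Integrable G μ)
    (h_lip : ∀ t ∈ Ioo 0 δ, ∀ᵐ z ∂μ, |F t z - F 0 z| ≤ t * G z)
    (h_diff : ∀ᵐ z ∂μ, HasDerivWithinAt (fun t => F t z) (F' z) (Ioi 0) 0) :
    HasDerivWithinAt (fun t => ∫ z, F t z ∂μ) (∫ z, F' z ∂μ) (Ici 0) 0 := by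
  have hIoo : Ioo 0 δ ∈ 𝓝[>] (0 : ℝ) := Ioo_mem_nhdsGT hδ
  have h₀ : (0 : ℝ) ∈ Ico 0 δ := left_mem_Ico.mpr hδ
  have hIoi : Ioi (0 : ℝ) \ {0} = Ioi 0 := sdiff_singleton_eq_self self_notMem_Ioi
  rw [← hasDerivWithinAt_Ioi_iff_Ici, hasDerivWithinAt_iff_tendsto_slope, hIoi]
  have hslope : Tendsto (fun t => ∫ z, slope (F · z) 0 t ∂μ) (𝓝[>] 0) (𝓝 (∫ z, F' z ∂μ)) := by
    refine tendsto_integral_filter_of_dominated_convergence G ?_ ?_ hG ?_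
    · filter_upwards [hIoo] with t ht
      simp only [slope_def_field]
      exact (((hF_int t (Ioo_subset_Ico_self ht)).sub (hF_int 0 h₀)).div_const _).1
    · filter_upwards [hIoo] with t ht
      filter_upwards [h_lip t ht] with z hz
      rw [slope_def_field, sub_zero, norm_div, Real.norm_eq_abs, Real.norm_eq_abs,
        abs_of_pos ht.1, div_le_iff₀ ht.1]
      linarith
    · filter_upwards [h_diff] with z hz
      simpa [hIoi] using hasDerivWithinAt_iff_tendsto_slope.mp hz
  refine hslope.congr' ?_
  filter_upwards [hIoo] with t ht
  simp only [slope_def_field]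
  rw [integral_div, integral_sub (hF_int t (Ioo_subset_Ico_self ht)) (hF_int 0 h₀)]

lemma integral_prod_sub_eq_integral_sub [SFinite μ] {A B : α × α → ℝ}
    (hA : Integrable A (μ.prod μ)) (hB : Integrable B (μ.prod μ)) :
    ∫ z, (A z - B z) ∂(μ.prod μ) = ∫ y, ((∫ x, A (x, y) ∂μ) - ∫ x, B (y, x) ∂μ) ∂μ := by
  rw [integral_sub hA hB, integral_sub hA.integral_prod_right hB.integral_prod_left,
    integral_prod_symm _ hA, integral_prod _ hB]

end Integration

structure IsBalancing (g : ℝ → ℝ) : Prop where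
  pos : ∀ u, 0 < u → 0 < g u
  le_one : ∀ u, 0 < u → g u ≤ 1
  balance : ∀ u, 0 < u → g u = u * g (1 / u)

lemma IsBalancing.le_self {g : ℝ → ℝ} (hg : IsBalancing g) {u : ℝ} (hu : 0 < u) : g u ≤ u := by
  rw [hg.balance u hu]
  nlinarith [hg.le_one (1 / u) (by positivity)]

section HastingsRatio

variable {X : Type*} {g g' : ℝ → ℝ} {q : X → X → ℝ} {p p' : X → ℝ} {x y : X} {cq : ℝ}

lemma hastingsRatio_pos (hq : ∀ x y, 0 < q x y) (hp : ∀ x, 0 < p x) (x y : X) :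
    0 < hastingsRatio q p x y := by
  have := hq x y; have := hq y x; have := hp x; have := hp y
  unfold hastingsRatio; positivity

lemma hastingsRatio_mul (hq : q x y ≠ 0) (hp : p x ≠ 0) :
    hastingsRatio q p x y * q x y = p y * q y x / p x := by
  unfold hastingsRatio; field_simp

lemma hastingsRatio_sub_hastingsRatio (hq : q x y ≠ 0) (hp : p x ≠ 0) (hp' : p' x ≠ 0) :
    hastingsRatio q p x y - hastingsRatio q p' x y
      = q y x * (p y * p' x - p' y * p x) / (q x y * (p x * p' x)) := by
  unfold hastingsRatio; field_simp

lemma IsBalancing.hastingsRatio_mul_le (hg : IsBalancing g) (hq : ∀ x y, 0 < q x y)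
    (hp : ∀ x, 0 < p x) (x y : X) :
    g (hastingsRatio q p x y) * q x y ≤ p y * q y x / p x := by
  rw [← hastingsRatio_mul (hq x y).ne' (hp x).ne']
  exact mul_le_mul_of_nonneg_right (hg.le_self (hastingsRatio_pos hq hp x y)) (hq x y).le

variable [MeasurableSpace X]

lemma measurable_hastingsRatio (hqm : Measurable (Function.uncurry q)) (hpm : Measurable p) :
    Measurable fun z : X × X => hastingsRatio q p z.1 z.2 :=
  ((hpm.comp measurable_snd).mul (hqm.comp measurable_swap)).div
    ((hpm.comp measurable_fst).mul hqm)

lemma measurable_comp_hastingsRatio_of_hasDerivAt (hg' : ∀ u, 0 < u → HasDerivAt g (g' u) u)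
    (hqm : Measurable (Function.uncurry q)) (hq : ∀ x y, 0 < q x y) (hpm : Measurable p)
    (hp : ∀ x, 0 < p x) :
    Measurable fun z : X × X => g' (hastingsRatio q p z.1 z.2) := by
  have h : (fun z : X × X => g' (hastingsRatio q p z.1 z.2))
      = fun z => deriv g (hastingsRatio q p z.1 z.2) :=
    funext fun z => (hg' _ (hastingsRatio_pos hq hp z.1 z.2)).deriv.symm
  rw [h]
  exact (measurable_deriv g).comp (measurable_hastingsRatio hqm hpm)

lemma IsBalancing.integrable_mul_hastingsRatio_mul {lam : Measure X} (hg : IsBalancing g)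
    (hgc : ContinuousOn g (Ioi 0)) (hqm : Measurable (Function.uncurry q))
    (hq : ∀ x y, 0 < q x y) (hcq : ∀ x y, q x y ≤ cq) (hpm : Measurable p) (hp : ∀ x, 0 < p x)
    {φ s : X → ℝ} (hφ : Measurable φ) (hφs : Integrable (fun y => |φ y| * s y) lam)
    (hps : ∀ y, p y ≤ s y) (x : X) :
    Integrable (fun y => φ y * g (hastingsRatio q p x y) * q x y) lam := by
  have hgm : Measurable fun y => g (hastingsRatio q p x y) :=
    hgc.measurable_comp_of_pos ((measurable_hastingsRatio hqm hpm).comp measurable_prodMk_left)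
      fun y => hastingsRatio_pos hq hp x y
  refine (hφs.const_mul (cq / p x)).mono'
    ((hφ.mul hgm).mul (hqm.comp measurable_prodMk_left)).aestronglyMeasurable
    (ae_of_all _ fun y => ?_)
  have hg0 := (hg.pos _ (hastingsRatio_pos hq hp x y)).le
  have hgq := hg.hastingsRatio_mul_le hq hp x y
  have := hp x; have := (hq y x).le; have := hcq y x; have := abs_nonneg (φ y)
  have := hps y; have := (hp y).le.trans (hps y)
  calc ‖φ y * g (hastingsRatio q p x y) * q x y‖
      = |φ y| * (g (hastingsRatio q p x y) * q x y) := by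
        rw [Real.norm_eq_abs, mul_assoc, abs_mul, abs_of_nonneg (mul_nonneg hg0 (hq x y).le)]
    _ ≤ |φ y| * (p y * q y x / p x) := by gcongr
    _ ≤ |φ y| * (s y * cq / p x) := by gcongr
    _ = cq / p x * (|φ y| * s y) := by ring

end HastingsRatio

section Flux

variable {X : Type*} {g g' : ℝ → ℝ} {q : X → X → ℝ} {p p' f w : X → ℝ}

noncomputable def hastingsFlux (g : ℝ → ℝ) (q : X → X → ℝ) (p f w : X → ℝ) (z : X × X) : ℝ :=
  w z.1 * ((f z.2 - f z.1) * g (hastingsRatio q p z.1 z.2) * q z.1 z.2)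

lemma abs_hastingsFlux_le (hg : IsBalancing g) (hq : ∀ x y, 0 < q x y) (hp : ∀ x, 0 < p x)
    (hw : ∀ x, 0 ≤ w x) (x y : X) :
    |hastingsFlux g q p f w (x, y)| ≤ (|f x| + |f y|) * (w x / p x * (p y * q y x)) := by
  have hg0 := (hg.pos _ (hastingsRatio_pos hq hp x y)).le
  have hgq := hg.hastingsRatio_mul_le hq hp x y
  have hgq0 := mul_nonneg hg0 (hq x y).le
  have hf : |f y - f x| ≤ |f x| + |f y| := (abs_sub_comm (f y) (f x)).trans_le (abs_sub _ _)
  have hwx := hw x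
  calc |hastingsFlux g q p f w (x, y)|
      = w x * |f y - f x| * (g (hastingsRatio q p x y) * q x y) := by
        simp only [hastingsFlux, abs_mul, abs_of_nonneg hwx, abs_of_nonneg hg0,
          abs_of_pos (hq x y)]
        ring
    _ ≤ w x * (|f x| + |f y|) * (p y * q y x / p x) := by gcongr
    _ = (|f x| + |f y|) * (w x / p x * (p y * q y x)) := by ring

lemma abs_hastingsFlux_sub_le (hg' : ∀ u, 0 < u → HasDerivAt g (g' u) u) {c : ℝ}
    (hc : ∀ u, 0 < u → |g' u| ≤ c) (hq : ∀ x y, 0 < q x y) (hp : ∀ x, 0 < p x)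
    (hp' : ∀ x, 0 < p' x) (hw : ∀ x, 0 ≤ w x) (x y : X) :
    |hastingsFlux g q p f w (x, y) - hastingsFlux g q p' f w (x, y)|
      ≤ c * (|f x| + |f y|) * w x * q y x * |p y * p' x - p' y * p x| / (p x * p' x) := by
  have hwx := hw x
  have hqxy := hq x y
  have hc0 : 0 ≤ c := (abs_nonneg _).trans (hc 1 one_pos)
  calc |hastingsFlux g q p f w (x, y) - hastingsFlux g q p' f w (x, y)|
      = w x * |f y - f x| * q x y
          * |g (hastingsRatio q p x y) - g (hastingsRatio q p' x y)| := by
        simp only [hastingsFlux, ← mul_sub, ← sub_mul, abs_mul, abs_of_nonneg hwx,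
          abs_of_pos hqxy]
        ring
    _ ≤ w x * (|f x| + |f y|) * q x y
          * (c * |hastingsRatio q p x y - hastingsRatio q p' x y|) := by
        gcongr
        · exact (abs_sub_comm (f y) (f x)).trans_le (abs_sub _ _)
        · exact abs_sub_le_of_hasDerivAt_Ioi hg' hc (hastingsRatio_pos hq hp' x y)
            (hastingsRatio_pos hq hp x y)
    _ = c * (|f x| + |f y|) * w x * q y x * |p y * p' x - p' y * p x| / (p x * p' x) := by
        rw [hastingsRatio_sub_hastingsRatio hqxy.ne' (hp x).ne' (hp' x).ne', abs_div, abs_mul,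
          abs_of_pos (hq y x), abs_of_pos (mul_pos hqxy (mul_pos (hp x) (hp' x)))]
        field_simp

variable [MeasurableSpace X] {lam : Measure X}

lemma measurable_hastingsFlux (hgc : ContinuousOn g (Ioi 0))
    (hqm : Measurable (Function.uncurry q)) (hq : ∀ x y, 0 < q x y) (hpm : Measurable p)
    (hp : ∀ x, 0 < p x) (hfm : Measurable f) (hwm : Measurable w) :
    Measurable (hastingsFlux g q p f w) :=
  (hwm.comp measurable_fst).mul ((((hfm.comp measurable_snd).sub (hfm.comp measurable_fst)).mul
    (hgc.measurable_comp_of_pos (measurable_hastingsRatio hqm hpm)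
      fun z => hastingsRatio_pos hq hp z.1 z.2)).mul hqm)

lemma hastingsKernelFun_eq_add_integral {x : X}
    (hfgq : Integrable (fun y => f y * g (hastingsRatio q p x y) * q x y) lam)
    (hgq : Integrable (fun y => g (hastingsRatio q p x y) * q x y) lam) :
    hastingsKernelFun lam g q p x f
      = f x + ∫ y, (f y - f x) * g (hastingsRatio q p x y) * q x y ∂lam := by
  have h : (fun y => (f y - f x) * g (hastingsRatio q p x y) * q x y) = fun y =>
      f y * g (hastingsRatio q p x y) * q x y - f x * (g (hastingsRatio q p x y) * q x y) := by
    funext y; ring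
  rw [hastingsKernelFun, h, integral_sub hfgq (hgq.const_mul _), integral_const_mul]
  ring

lemma integral_hastingsKernelFun_withDensity [SFinite lam] (hwm : Measurable w)
    (hw : ∀ x, 0 ≤ w x) (hwf : Integrable (fun x => w x * f x) lam)
    (hflux : Integrable (hastingsFlux g q p f w) (lam.prod lam))
    (hfgq : ∀ x, Integrable (fun y => f y * g (hastingsRatio q p x y) * q x y) lam)
    (hgq : ∀ x, Integrable (fun y => g (hastingsRatio q p x y) * q x y) lam) :
    ∫ x, hastingsKernelFun lam g q p x f ∂(lam.withDensity fun x => ENNReal.ofReal (w x))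
      = ∫ x, w x * f x ∂lam + ∫ z, hastingsFlux g q p f w z ∂(lam.prod lam) := by
  rw [integral_withDensity_eq_integral_toReal_smul hwm.ennreal_ofReal
      (ae_of_all _ fun _ => ENNReal.ofReal_lt_top), integral_prod _ hflux,
    ← integral_add hwf hflux.integral_prod_left]
  refine integral_congr_ae (ae_of_all _ fun x => ?_)
  simp only [ENNReal.toReal_ofReal (hw x), smul_eq_mul, hastingsFlux, integral_const_mul,
    hastingsKernelFun_eq_add_integral (hfgq x) (hgq x)]
  ring

end Flux

section Mixture

variable {X : Type*} {pμ pν : X → ℝ} {t : ℝ} {x y : X}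

noncomputable def mixture (pμ pν : X → ℝ) (t : ℝ) (x : X) : ℝ := (1 - t) * pμ x + t * pν x

@[simp] lemma mixture_zero : mixture pμ pν 0 = pμ := by
  funext x; simp [mixture]

lemma mixture_pos (ht : t ∈ Ico (0 : ℝ) 1) (hμ : 0 < pμ x) (hν : 0 ≤ pν x) :
    0 < mixture pμ pν t x := by
  unfold mixture; nlinarith [ht.1, ht.2]

lemma half_le_mixture (ht : t ∈ Icc (0 : ℝ) (1 / 2)) (hμ : 0 ≤ pμ x) (hν : 0 ≤ pν x) :
    pμ x / 2 ≤ mixture pμ pν t x := by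
  unfold mixture; nlinarith [ht.1, ht.2]

lemma mixture_le_add (ht : t ∈ Icc (0 : ℝ) 1) (hμ : 0 ≤ pμ x) (hν : 0 ≤ pν x) :
    mixture pμ pν t x ≤ pμ x + pν x := by
  unfold mixture; nlinarith [ht.1, ht.2]

lemma mixture_mul_sub_mul :
    mixture pμ pν t y * pμ x - pμ y * mixture pμ pν t x = t * (pν y * pμ x - pμ y * pν x) := by
  unfold mixture; ring

lemma measurable_mixture [MeasurableSpace X] (hμ : Measurable pμ) (hν : Measurable pν) :
    Measurable (mixture pμ pν t) :=
  (hμ.const_mul _).add (hν.const_mul _)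

lemma hasDerivAt_mixture : HasDerivAt (fun t => mixture pμ pν t x) (pν x - pμ x) t := by
  have h : (fun t => mixture pμ pν t x) = fun t => pμ x + t * (pν x - pμ x) := by
    funext t; unfold mixture; ring
  simpa [h] using (hasDerivAt_mul_const (pν x - pμ x)).const_add (pμ x)

lemma hasDerivAt_hastingsRatio_mixture {q : X → X → ℝ} (hq : q x y ≠ 0) (hμ : pμ x ≠ 0) :
    HasDerivAt (fun t => hastingsRatio q (mixture pμ pν t) x y)
      (q y x * (pν y * pμ x - pμ y * pν x) / (q x y * pμ x ^ 2)) 0 := by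
  have := ((hasDerivAt_mixture (pμ := pμ) (pν := pν) (t := 0) (x := y)).mul_const (q y x)).fun_div
    ((hasDerivAt_mixture (pμ := pμ) (pν := pν) (x := x)).mul_const (q x y))
    (by simpa using mul_ne_zero hμ hq)
  unfold hastingsRatio
  refine this.congr_deriv ?_
  simp only [mixture_zero]
  field_simp
  ring

end Mixture

section Perturbation

variable {X : Type*} {g g' : ℝ → ℝ} {q : X → X → ℝ} {pμ pν f w : X → ℝ} {c cq cw t : ℝ}

def pairEnvelope (f s : X → ℝ) (z : X × X) : ℝ := (|f z.1| + |f z.2|) * (s z.1 * s z.2)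

lemma abs_hastingsFlux_le_pairEnvelope (hg : IsBalancing g) (hq : ∀ x y, 0 < q x y)
    (hcq : ∀ x y, q x y ≤ cq) (hpμ : ∀ x, 0 < pμ x) (hpν : ∀ x, 0 ≤ pν x) (hw : ∀ x, 0 ≤ w x)
    (hcw : ∀ x, w x ≤ cw * pμ x ^ 2) (z : X × X) :
    |hastingsFlux g q pμ f w z| ≤ cq * cw * pairEnvelope f (fun x => pμ x + pν x) z := by
  obtain ⟨x, y⟩ := z
  have hwx := div_le_mul_add_of_le_mul_sq (hw x) (hpμ x) (hpν x) (hcw x)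
  have hwx0 := div_nonneg (hw x) (hpμ x).le
  have := hwx0.trans hwx; have := (hq y x).le; have := hcq y x; have := (hq y x).le.trans (hcq y x)
  have := (hpμ x).le; have := (hpμ y).le; have := hpν x; have := hpν y
  calc _ ≤ (|f x| + |f y|) * (w x / pμ x * (pμ y * q y x)) := abs_hastingsFlux_le hg hq hpμ hw x y
    _ ≤ (|f x| + |f y|) * (cw * (pμ x + pν x) * ((pμ y + pν y) * cq)) := by bound
    _ = _ := by unfold pairEnvelope; ring

lemma abs_hastingsFlux_mixture_sub_le (hg' : ∀ u, 0 < u → HasDerivAt g (g' u) u)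
    (hc : ∀ u, 0 < u → |g' u| ≤ c) (hq : ∀ x y, 0 < q x y) (hcq : ∀ x y, q x y ≤ cq)
    (hpμ : ∀ x, 0 < pμ x) (hpν : ∀ x, 0 ≤ pν x) (hw : ∀ x, 0 ≤ w x)
    (hcw : ∀ x, w x ≤ cw * pμ x ^ 2) (ht : t ∈ Icc (0 : ℝ) (1 / 2)) (z : X × X) :
    |hastingsFlux g q (mixture pμ pν t) f w z - hastingsFlux g q pμ f w z|
      ≤ t * (2 * c * cq * cw * pairEnvelope f (fun x => pμ x + pν x) z) := by
  obtain ⟨x, y⟩ := z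
  have hpt : ∀ x, pμ x / 2 ≤ mixture pμ pν t x := fun x => half_le_mixture ht (hpμ x).le (hpν x)
  have hpt0 : ∀ x, 0 < mixture pμ pν t x := fun x => (half_pos (hpμ x)).trans_le (hpt x)
  have hcw0 : 0 ≤ cw :=
    nonneg_of_mul_nonneg_left ((hw x).trans (hcw x)) (pow_pos (hpμ x) 2)
  have hwx : w x / (mixture pμ pν t x * pμ x) ≤ 2 * cw := by
    rw [div_le_iff₀ (mul_pos (hpt0 x) (hpμ x))]
    nlinarith [hcw x, mul_le_mul_of_nonneg_left (hpt x) (mul_nonneg hcw0 (hpμ x).le)]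
  have hN : |pν y * pμ x - pμ y * pν x| ≤ (pμ x + pν x) * (pμ y + pν y) := by
    rw [abs_le]; constructor <;> nlinarith [hpμ x, hpμ y, hpν x, hpν y]
  have := div_nonneg (hw x) (mul_pos (hpt0 x) (hpμ x)).le
  have := (abs_nonneg _).trans (hc 1 one_pos)
  have := (abs_sub_comm (f y) (f x)).trans_le (abs_sub (f x) (f y))
  have := (hq y x).le; have := hcq y x; have := (hq y x).le.trans (hcq y x)
  have := (hpμ x).le; have := (hpμ y).le; have := hpν x; have := hpν y; have := ht.1
  refine (abs_hastingsFlux_sub_le hg' hc hq hpt0 hpμ hw x y).trans ?_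
  rw [mixture_mul_sub_mul, abs_mul, abs_of_nonneg ht.1]
  calc _ = t * (c * (|f x| + |f y|) * q y x * |pν y * pμ x - pμ y * pν x|
          * (w x / (mixture pμ pν t x * pμ x))) := by ring
    _ ≤ t * (c * (|f x| + |f y|) * cq * ((pμ x + pν x) * (pμ y + pν y)) * (2 * cw)) := by
        bound
    _ = _ := by unfold pairEnvelope; ring

noncomputable def hastingsFluxDeriv (g' : ℝ → ℝ) (q : X → X → ℝ) (pμ pν f w : X → ℝ)
    (z : X × X) : ℝ :=
  w z.1 * ((f z.2 - f z.1) * g' (hastingsRatio q pμ z.1 z.2) * q z.2 z.1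
    * (pν z.2 * pμ z.1 - pμ z.2 * pν z.1) / pμ z.1 ^ 2)

lemma hasDerivAt_hastingsFlux_mixture (hg' : ∀ u, 0 < u → HasDerivAt g (g' u) u)
    (hq : ∀ x y, 0 < q x y) (hpμ : ∀ x, 0 < pμ x) (z : X × X) :
    HasDerivAt (fun t => hastingsFlux g q (mixture pμ pν t) f w z)
      (hastingsFluxDeriv g' q pμ pν f w z) 0 := by
  obtain ⟨x, y⟩ := z
  have hr := (hg' _ (hastingsRatio_pos hq hpμ x y)).comp_of_eq (0 : ℝ)
    (hasDerivAt_hastingsRatio_mixture (pν := pν) (hq x y).ne' (hpμ x).ne') (by simp)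
  have h : (fun t => hastingsFlux g q (mixture pμ pν t) f w (x, y)) = fun t =>
      w x * (f y - f x) * q x y * (g ∘ fun t => hastingsRatio q (mixture pμ pν t) x y) t := by
    funext t; simp only [hastingsFlux, Function.comp]; ring
  rw [h]
  refine (hr.const_mul _).congr_deriv ?_
  have := hq x y; have := hpμ x
  simp only [hastingsFluxDeriv]
  field_simp

noncomputable def hastingsFluxDerivTarget (g' : ℝ → ℝ) (q : X → X → ℝ) (pμ pν f w : X → ℝ)
    (z : X × X) : ℝ :=
  (pν z.2 - pμ z.2) *
    ((f z.2 - f z.1) * (w z.1 / pμ z.1) * g' (hastingsRatio q pμ z.1 z.2) * q z.2 z.1)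

noncomputable def hastingsFluxDerivSource (g' : ℝ → ℝ) (q : X → X → ℝ) (pμ pν f w : X → ℝ)
    (z : X × X) : ℝ :=
  (pν z.1 - pμ z.1) * (w z.1 / pμ z.1 ^ 2) *
    ((f z.2 - f z.1) * q z.2 z.1 * g' (hastingsRatio q pμ z.1 z.2) * pμ z.2)

lemma hastingsFluxDeriv_eq_sub (hpμ : ∀ x, 0 < pμ x) (z : X × X) :
    hastingsFluxDeriv g' q pμ pν f w z
      = hastingsFluxDerivTarget g' q pμ pν f w z - hastingsFluxDerivSource g' q pμ pν f w z := by
  have := hpμ z.1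
  simp only [hastingsFluxDeriv, hastingsFluxDerivTarget, hastingsFluxDerivSource]
  field_simp
  ring

lemma abs_hastingsFluxDerivTarget_le (hc : ∀ u, 0 < u → |g' u| ≤ c) (hq : ∀ x y, 0 < q x y)
    (hcq : ∀ x y, q x y ≤ cq) (hpμ : ∀ x, 0 < pμ x) (hpν : ∀ x, 0 ≤ pν x) (hw : ∀ x, 0 ≤ w x)
    (hcw : ∀ x, w x ≤ cw * pμ x ^ 2) (z : X × X) :
    |hastingsFluxDerivTarget g' q pμ pν f w z|
      ≤ c * cq * cw * pairEnvelope f (fun x => pμ x + pν x) z := by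
  obtain ⟨x, y⟩ := z
  have hwx := div_le_mul_add_of_le_mul_sq (hw x) (hpμ x) (hpν x) (hcw x)
  have hwx0 := div_nonneg (hw x) (hpμ x).le
  have := hwx0.trans hwx
  have := hc _ (hastingsRatio_pos hq hpμ x y); have := (abs_nonneg _).trans (hc 1 one_pos)
  have := (abs_sub_comm (f y) (f x)).trans_le (abs_sub (f x) (f y))
  have : |pν y - pμ y| ≤ pμ y + pν y :=
    abs_le.2 ⟨by linarith [hpμ y, hpν y], by linarith [hpμ y, hpν y]⟩
  have := (hq y x).le; have := hcq y x; have := (hq y x).le.trans (hcq y x)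
  have := (hpμ x).le; have := (hpμ y).le; have := hpν x; have := hpν y
  calc _ = |pν y - pμ y|
        * (|f y - f x| * (w x / pμ x) * |g' (hastingsRatio q pμ x y)| * q y x) := by
        simp only [hastingsFluxDerivTarget, abs_mul, abs_of_nonneg hwx0, abs_of_pos (hq y x)]
    _ ≤ (pμ y + pν y) * ((|f x| + |f y|) * (cw * (pμ x + pν x)) * c * cq) := by bound
    _ = _ := by unfold pairEnvelope; ring

lemma abs_hastingsFluxDerivSource_le (hc : ∀ u, 0 < u → |g' u| ≤ c) (hq : ∀ x y, 0 < q x y)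
    (hcq : ∀ x y, q x y ≤ cq) (hpμ : ∀ x, 0 < pμ x) (hpν : ∀ x, 0 ≤ pν x) (hw : ∀ x, 0 ≤ w x)
    (hcw : ∀ x, w x ≤ cw * pμ x ^ 2) (z : X × X) :
    |hastingsFluxDerivSource g' q pμ pν f w z|
      ≤ c * cq * cw * pairEnvelope f (fun x => pμ x + pν x) z := by
  obtain ⟨x, y⟩ := z
  have hwx : w x / pμ x ^ 2 ≤ cw := by
    rw [div_le_iff₀ (pow_pos (hpμ x) 2)]; exact hcw x
  have hwx0 := div_nonneg (hw x) (sq_nonneg (pμ x))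
  have := hc _ (hastingsRatio_pos hq hpμ x y); have := (abs_nonneg _).trans (hc 1 one_pos)
  have := (abs_sub_comm (f y) (f x)).trans_le (abs_sub (f x) (f y))
  have : |pν x - pμ x| ≤ pμ x + pν x :=
    abs_le.2 ⟨by linarith [hpμ x, hpν x], by linarith [hpμ x, hpν x]⟩
  have := (hq y x).le; have := hcq y x; have := (hq y x).le.trans (hcq y x)
  have := (hpμ x).le; have := (hpμ y).le; have := hpν x; have := hpν y
  calc _ = |pν x - pμ x| * (w x / pμ x ^ 2)
        * (|f y - f x| * q y x * |g' (hastingsRatio q pμ x y)| * pμ y) := by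
        simp only [hastingsFluxDerivSource, abs_mul, abs_of_nonneg hwx0, abs_of_pos (hq y x),
          abs_of_pos (hpμ y)]
    _ ≤ (pμ x + pν x) * cw * ((|f x| + |f y|) * cq * c * (pμ y + pν y)) := by bound
    _ = _ := by unfold pairEnvelope; ring

end Perturbation

section PerturbationIntegral

variable {X : Type*} [MeasurableSpace X] {lam : Measure X} {g g' : ℝ → ℝ}
  {q : X → X → ℝ} {pμ pν f w : X → ℝ} {c cq cw cμ t : ℝ}

lemma integrable_pairEnvelope {s : X → ℝ} (hfs : Integrable (fun x => |f x| * s x) lam)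
    (hs : Integrable s lam) : Integrable (pairEnvelope f s) (lam.prod lam) := by
  have h : pairEnvelope f s = fun z => |f z.1| * s z.1 * s z.2 + s z.1 * (|f z.2| * s z.2) := by
    funext z; unfold pairEnvelope; ring
  rw [h]
  exact (hfs.mul_prod hs).add (hs.mul_prod hfs)

lemma integrable_mul_of_le_mul_sq (hwm : Measurable w) (hw : ∀ x, 0 ≤ w x)
    (hcw : ∀ x, w x ≤ cw * pμ x ^ 2) (hpμ : ∀ x, 0 < pμ x) (hcμ : ∀ x, pμ x ≤ cμ)
    (hpν : ∀ x, 0 ≤ pν x) (hfm : Measurable f)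
    (hfs : Integrable (fun x => |f x| * (pμ x + pν x)) lam) :
    Integrable (fun x => w x * f x) lam := by
  refine (hfs.const_mul (cw * cμ)).mono' (hwm.mul hfm).aestronglyMeasurable
    (ae_of_all _ fun x => ?_)
  have hwx := div_le_mul_add_of_le_mul_sq (hw x) (hpμ x) (hpν x) (hcw x)
  rw [div_le_iff₀ (hpμ x)] at hwx
  have := nonneg_of_mul_nonneg_left ((hw x).trans (hcw x)) (pow_pos (hpμ x) 2)
  have := (hpμ x).le; have := hpν x; have := abs_nonneg (f x); have := hcμ x
  calc ‖w x * f x‖ = w x * |f x| := by rw [Real.norm_eq_abs, abs_mul, abs_of_nonneg (hw x)]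
    _ ≤ cw * (pμ x + pν x) * pμ x * |f x| := by gcongr
    _ ≤ cw * (pμ x + pν x) * cμ * |f x| := by bound
    _ = _ := by ring

lemma integrable_hastingsFlux_mixture (hg : IsBalancing g)
    (hg' : ∀ u, 0 < u → HasDerivAt g (g' u) u) (hc : ∀ u, 0 < u → |g' u| ≤ c)
    (hqm : Measurable (Function.uncurry q)) (hq : ∀ x y, 0 < q x y) (hcq : ∀ x y, q x y ≤ cq)
    (hpμm : Measurable pμ) (hpνm : Measurable pν) (hpμ : ∀ x, 0 < pμ x) (hpν : ∀ x, 0 ≤ pν x)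
    (hwm : Measurable w) (hw : ∀ x, 0 ≤ w x) (hcw : ∀ x, w x ≤ cw * pμ x ^ 2)
    (hfm : Measurable f) (hs : Integrable (fun x => pμ x + pν x) lam)
    (hfs : Integrable (fun x => |f x| * (pμ x + pν x)) lam) (ht : t ∈ Icc (0 : ℝ) (1 / 2)) :
    Integrable (hastingsFlux g q (mixture pμ pν t) f w) (lam.prod lam) := by
  have hE := integrable_pairEnvelope hfs hs
  have hgc : ContinuousOn g (Ioi 0) := fun u hu => (hg' u hu).continuousAt.continuousWithinAt
  have hpt : ∀ x, 0 < mixture pμ pν t x := fun x =>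
    mixture_pos ⟨ht.1, ht.2.trans_lt (by norm_num)⟩ (hpμ x) (hpν x)
  have h₀ : Integrable (hastingsFlux g q pμ f w) (lam.prod lam) :=
    (hE.const_mul (cq * cw)).mono'
      (measurable_hastingsFlux hgc hqm hq hpμm hpμ hfm hwm).aestronglyMeasurable
      (ae_of_all _ (abs_hastingsFlux_le_pairEnvelope hg hq hcq hpμ hpν hw hcw))
  refine h₀.of_abs_sub_le (hE.const_mul (t * (2 * c * cq * cw)))
    (measurable_hastingsFlux hgc hqm hq (measurable_mixture hpμm hpνm) hpt hfm
      hwm).aestronglyMeasurable (ae_of_all _ fun z => ?_)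
  exact (abs_hastingsFlux_mixture_sub_le hg' hc hq hcq hpμ hpν hw hcw ht z).trans_eq (by ring)

lemma integral_hastingsKernelFun_mixture [SFinite lam] (hg : IsBalancing g)
    (hg' : ∀ u, 0 < u → HasDerivAt g (g' u) u) (hc : ∀ u, 0 < u → |g' u| ≤ c)
    (hqm : Measurable (Function.uncurry q)) (hq : ∀ x y, 0 < q x y) (hcq : ∀ x y, q x y ≤ cq)
    (hpμm : Measurable pμ) (hpνm : Measurable pν) (hpμ : ∀ x, 0 < pμ x) (hpν : ∀ x, 0 ≤ pν x)
    (hwm : Measurable w) (hw : ∀ x, 0 ≤ w x) (hcw : ∀ x, w x ≤ cw * pμ x ^ 2)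
    (hfm : Measurable f) (hs : Integrable (fun x => pμ x + pν x) lam)
    (hfs : Integrable (fun x => |f x| * (pμ x + pν x)) lam)
    (hwf : Integrable (fun x => w x * f x) lam) (ht : t ∈ Icc (0 : ℝ) (1 / 2)) :
    ∫ x, hastingsKernelFun lam g q (mixture pμ pν t) x f
        ∂(lam.withDensity fun x => ENNReal.ofReal (w x))
      = ∫ x, w x * f x ∂lam + ∫ z, hastingsFlux g q (mixture pμ pν t) f w z ∂(lam.prod lam) := by
  have hgc : ContinuousOn g (Ioi 0) := fun u hu => (hg' u hu).continuousAt.continuousWithinAt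
  have hpm := measurable_mixture (t := t) hpμm hpνm
  have hpt : ∀ x, 0 < mixture pμ pν t x := fun x =>
    mixture_pos ⟨ht.1, ht.2.trans_lt (by norm_num)⟩ (hpμ x) (hpν x)
  have hps : ∀ x, mixture pμ pν t x ≤ pμ x + pν x := fun x =>
    mixture_le_add ⟨ht.1, ht.2.trans (by norm_num)⟩ (hpμ x).le (hpν x)
  refine integral_hastingsKernelFun_withDensity hwm hw hwf
    (integrable_hastingsFlux_mixture hg hg' hc hqm hq hcq hpμm hpνm hpμ hpν hwm hw hcw hfm hs hfs
      ht)
    (hg.integrable_mul_hastingsRatio_mul hgc hqm hq hcq hpm hpt hfm hfs hps) fun x => ?_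
  simpa using hg.integrable_mul_hastingsRatio_mul hgc hqm hq hcq hpm hpt (φ := fun _ => 1)
    measurable_const (by simpa using hs) hps x

lemma hasDerivWithinAt_integral_hastingsFlux_mixture (hg : IsBalancing g)
    (hg' : ∀ u, 0 < u → HasDerivAt g (g' u) u) (hc : ∀ u, 0 < u → |g' u| ≤ c)
    (hqm : Measurable (Function.uncurry q)) (hq : ∀ x y, 0 < q x y) (hcq : ∀ x y, q x y ≤ cq)
    (hpμm : Measurable pμ) (hpνm : Measurable pν) (hpμ : ∀ x, 0 < pμ x) (hpν : ∀ x, 0 ≤ pν x)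
    (hwm : Measurable w) (hw : ∀ x, 0 ≤ w x) (hcw : ∀ x, w x ≤ cw * pμ x ^ 2)
    (hfm : Measurable f) (hs : Integrable (fun x => pμ x + pν x) lam)
    (hfs : Integrable (fun x => |f x| * (pμ x + pν x)) lam) :
    HasDerivWithinAt (fun t => ∫ z, hastingsFlux g q (mixture pμ pν t) f w z ∂(lam.prod lam))
      (∫ z, hastingsFluxDeriv g' q pμ pν f w z ∂(lam.prod lam)) (Ici 0) 0 :=
  hasDerivWithinAt_integral_Ici_of_dominated (by norm_num : (0 : ℝ) < 1 / 2)
    (fun t ht => integrable_hastingsFlux_mixture hg hg' hc hqm hq hcq hpμm hpνm hpμ hpν hwm hw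
      hcw hfm hs hfs ⟨ht.1, ht.2.le⟩)
    ((integrable_pairEnvelope hfs hs).const_mul (2 * c * cq * cw))
    (fun t ht => ae_of_all _ fun z => by
      simpa only [mixture_zero] using
        abs_hastingsFlux_mixture_sub_le hg' hc hq hcq hpμ hpν hw hcw ⟨ht.1.le, ht.2.le⟩ z)
    (ae_of_all _ fun z => (hasDerivAt_hastingsFlux_mixture hg' hq hpμ z).hasDerivWithinAt)

lemma integral_hastingsFluxDeriv [SFinite lam] (hg' : ∀ u, 0 < u → HasDerivAt g (g' u) u)
    (hc : ∀ u, 0 < u → |g' u| ≤ c) (hqm : Measurable (Function.uncurry q))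
    (hq : ∀ x y, 0 < q x y) (hcq : ∀ x y, q x y ≤ cq) (hpμm : Measurable pμ)
    (hpνm : Measurable pν) (hpμ : ∀ x, 0 < pμ x) (hpν : ∀ x, 0 ≤ pν x) (hwm : Measurable w)
    (hw : ∀ x, 0 ≤ w x) (hcw : ∀ x, w x ≤ cw * pμ x ^ 2) (hfm : Measurable f)
    (hs : Integrable (fun x => pμ x + pν x) lam)
    (hfs : Integrable (fun x => |f x| * (pμ x + pν x)) lam) :
    ∫ z, hastingsFluxDeriv g' q pμ pν f w z ∂(lam.prod lam)
      = ∫ y, (pν y - pμ y) *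
          ((∫ z, (f y - f z) * (w z / pμ z) * g' (hastingsRatio q pμ z y) * q y z ∂lam)
            - w y / pμ y ^ 2 *
                ∫ z, (f z - f y) * q z y * g' (hastingsRatio q pμ y z) * pμ z ∂lam) ∂lam := by
  have hE := (integrable_pairEnvelope hfs hs).const_mul (c * cq * cw)
  have hg'm := measurable_comp_hastingsRatio_of_hasDerivAt hg' hqm hq hpμm hpμ
  have hqm' : Measurable fun z : X × X => q z.2 z.1 := hqm.comp measurable_swap
  have hfm' : Measurable fun z : X × X => f z.2 - f z.1 :=
    (hfm.comp measurable_snd).sub (hfm.comp measurable_fst)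
  have hT : Integrable (hastingsFluxDerivTarget g' q pμ pν f w) (lam.prod lam) :=
    hE.mono' (((hpνm.comp measurable_snd).sub (hpμm.comp measurable_snd)).mul
      (((hfm'.mul ((hwm.comp measurable_fst).div (hpμm.comp measurable_fst))).mul hg'm).mul
        hqm')).aestronglyMeasurable
      (ae_of_all _ (abs_hastingsFluxDerivTarget_le hc hq hcq hpμ hpν hw hcw))
  have hS : Integrable (hastingsFluxDerivSource g' q pμ pν f w) (lam.prod lam) :=
    hE.mono' ((((hpνm.comp measurable_fst).sub (hpμm.comp measurable_fst)).mul
      ((hwm.comp measurable_fst).div ((hpμm.comp measurable_fst).pow_const 2))).mul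
      (((hfm'.mul hqm').mul hg'm).mul (hpμm.comp measurable_snd))).aestronglyMeasurable
      (ae_of_all _ (abs_hastingsFluxDerivSource_le hc hq hcq hpμ hpν hw hcw))
  simp_rw [hastingsFluxDeriv_eq_sub hpμ, integral_prod_sub_eq_integral_sub hT hS]
  refine integral_congr_ae (ae_of_all _ fun y => ?_)
  simp only [hastingsFluxDerivTarget, hastingsFluxDerivSource, integral_const_mul]
  ring

end PerturbationIntegral

theorem stmt_5_general {X : Type*} [MeasurableSpace X]
    (lam : Measure X) [SigmaFinite lam]
    (V : X → ℝ) (hV1 : ∀ x, 1 ≤ V x)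
    (g g' : ℝ → ℝ)
    (hgpos : ∀ u : ℝ, 0 < u → 0 < g u ∧ g u ≤ 1)
    (hgbal : ∀ u : ℝ, 0 < u → g u = u * g (1 / u))
    (hg' : ∀ u : ℝ, 0 < u → HasDerivAt g (g' u) u)
    (hg'b : ∃ c, ∀ u : ℝ, 0 < u → |g' u| ≤ c)
    (q : X → X → ℝ) (hqm : Measurable (Function.uncurry q))
    (hqpos : ∀ x y, 0 < q x y) (hqb : ∃ c, ∀ x y, q x y ≤ c)
    (pμ pν : X → ℝ) (hpμm : Measurable pμ) (hpνm : Measurable pν)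
    (hpμpos : ∀ x, 0 < pμ x) (hpνpos : ∀ x, 0 < pν x)
    (hpμb : ∃ c, ∀ x, pμ x ≤ c)
    (hVμ : Integrable (fun x => V x * pμ x) lam)
    (hVν : Integrable (fun x => V x * pν x) lam)
    (pρ : X → ℝ) (hpρm : Measurable pρ) (hpρ0 : ∀ x, 0 ≤ pρ x)
    (hρμ : ∃ c, ∀ x, pρ x ≤ c * pμ x ^ 2)
    (f : X → ℝ) (hfm : Measurable f) (hfV : ∃ c, ∀ x, |f x| ≤ c * V x) :
    HasDerivWithinAt
      (fun t =>
        ∫ x, hastingsKernelFun lam g q (fun y => (1 - t) * pμ y + t * pν y) x f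
          ∂(lam.withDensity fun x => ENNReal.ofReal (pρ x)))
      (∫ y, (pν y - pμ y) *
          ((∫ z, (f y - f z) * (pρ z / pμ z) * g' (hastingsRatio q pμ z y) * q y z ∂lam)
            - pρ y / pμ y ^ 2 *
                ∫ z, (f z - f y) * q z y * g' (hastingsRatio q pμ y z) * pμ z ∂lam) ∂lam)
      (Set.Ici 0) 0 := by
  obtain ⟨c, hc⟩ := hg'b
  obtain ⟨cq, hcq⟩ := hqb
  obtain ⟨cμ, hcμ⟩ := hpμb
  obtain ⟨cρ, hcρ⟩ := hρμ
  obtain ⟨cf, hcf⟩ := hfV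
  have hg : IsBalancing g := ⟨fun u hu => (hgpos u hu).1, fun u hu => (hgpos u hu).2, hgbal⟩
  have hpν : ∀ x, 0 ≤ pν x := fun x => (hpνpos x).le
  have hs0 : ∀ x, 0 ≤ pμ x + pν x := fun x => add_nonneg (hpμpos x).le (hpν x)
  have hVs : Integrable (fun x => V x * (pμ x + pν x)) lam := by
    simpa only [mul_add] using hVμ.fun_add hVν
  have hs : Integrable (fun x => pμ x + pν x) lam :=
    hVs.mono' (hpμm.add hpνm).aestronglyMeasurable (ae_of_all _ fun x => by
      simpa [abs_of_nonneg (hs0 x)] using le_mul_of_one_le_left (hs0 x) (hV1 x))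
  have hfs := integrable_abs_mul_of_abs_le hVs (hpμm.add hpνm) hs0 hfm hcf
  have hρf := integrable_mul_of_le_mul_sq hpρm hpρ0 hcρ hpμpos hcμ hpν hfm hfs
  have hΦ := fun t (ht : t ∈ Icc (0 : ℝ) (1 / 2)) => integral_hastingsKernelFun_mixture hg hg' hc
    hqm hqpos hcq hpμm hpνm hpμpos hpν hpρm hpρ0 hcρ hfm hs hfs hρf ht
  rw [← integral_hastingsFluxDeriv hg' hc hqm hqpos hcq hpμm hpνm hpμpos hpν hpρm hpρ0 hcρ hfm hs
    hfs]
  refine ((hasDerivWithinAt_integral_hastingsFlux_mixture hg hg' hc hqm hqpos hcq hpμm hpνm hpμpos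
    hpν hpρm hpρ0 hcρ hfm hs hfs).const_add _).congr_of_eventuallyEq ?_ (hΦ 0 ⟨le_rfl, by norm_num⟩)
  filter_upwards [Ico_mem_nhdsGE (by norm_num : (0 : ℝ) < 1 / 2)] with t ht
  exact hΦ t ⟨ht.1, ht.2.le⟩

/-- **Derivative in the invariant distribution of Hastings kernels (density case).**
With `g` a twice-differentiable non-decreasing balancing function with bounded first and
second derivatives, `q` a bounded positive proposal density, `μ = pμ·λ`, `ν = pν·λ`
probability measures with positive bounded densities and finite `V`-moments, `ρ = pρ·λ` a
warm-start initial distribution (`pρ/pμ², pρ/pν²` bounded), and `f` with `‖f‖_V < ∞`,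
the map `t ↦ P_{μ_t}(ρ, f)` (`μ_t` the measure with density `(1-t)pμ + t pν`) has right
derivative at `t = 0` equal to `∫ (pν(y) - pμ(y)) D(y) λ(dy)` with
`D(y) = ∫ (f(y)-f(z)) (pρ(z)/pμ(z)) g'(r_μ(z,y)) q(y,z) λ(dz)
        - (pρ(y)/pμ(y)²) ∫ (f(z)-f(y)) q(z,y) g'(r_μ(y,z)) pμ(z) λ(dz)`. -/
theorem stmt_5 {X : Type*} [MeasurableSpace X]
    (lam : Measure X) [SigmaFinite lam]
    (V : X → ℝ) (hVm : Measurable V) (hV1 : ∀ x, 1 ≤ V x)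
    (g g' g'' : ℝ → ℝ)
    (hgpos : ∀ u : ℝ, 0 < u → 0 < g u ∧ g u ≤ 1)
    (hgbal : ∀ u : ℝ, 0 < u → g u = u * g (1 / u))
    (hgmono : MonotoneOn g (Set.Ioi 0))
    (hg' : ∀ u : ℝ, 0 < u → HasDerivAt g (g' u) u)
    (hg'' : ∀ u : ℝ, 0 < u → HasDerivAt g' (g'' u) u)
    (hg'b : ∃ c, ∀ u : ℝ, 0 < u → |g' u| ≤ c)
    (hg''b : ∃ c, ∀ u : ℝ, 0 < u → |g'' u| ≤ c)
    (q : X → X → ℝ) (hqm : Measurable (Function.uncurry q))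
    (hqpos : ∀ x y, 0 < q x y) (hqb : ∃ c, ∀ x y, q x y ≤ c)
    (hqint : ∀ x, ∫ y, q x y ∂lam = 1)
    (pμ pν : X → ℝ) (hpμm : Measurable pμ) (hpνm : Measurable pν)
    (hpμpos : ∀ x, 0 < pμ x) (hpνpos : ∀ x, 0 < pν x)
    (hpμb : ∃ c, ∀ x, pμ x ≤ c) (hpνb : ∃ c, ∀ x, pν x ≤ c)
    (hμprob : IsProbabilityMeasure (lam.withDensity fun x => ENNReal.ofReal (pμ x)))
    (hνprob : IsProbabilityMeasure (lam.withDensity fun x => ENNReal.ofReal (pν x)))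
    (hVμ : Integrable (fun x => V x * pμ x) lam)
    (hVν : Integrable (fun x => V x * pν x) lam)
    (pρ : X → ℝ) (hpρm : Measurable pρ) (hpρ0 : ∀ x, 0 ≤ pρ x)
    (hρprob : IsProbabilityMeasure (lam.withDensity fun x => ENNReal.ofReal (pρ x)))
    (hρμ : ∃ c, ∀ x, pρ x ≤ c * pμ x ^ 2)
    (hρν : ∃ c, ∀ x, pρ x ≤ c * pν x ^ 2)
    (f : X → ℝ) (hfm : Measurable f) (hfV : ∃ c, ∀ x, |f x| ≤ c * V x) :
    HasDerivWithinAt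
      (fun t =>
        ∫ x, hastingsKernelFun lam g q (fun y => (1 - t) * pμ y + t * pν y) x f
          ∂(lam.withDensity fun x => ENNReal.ofReal (pρ x)))
      (∫ y, (pν y - pμ y) *
          ((∫ z, (f y - f z) * (pρ z / pμ z) * g' (hastingsRatio q pμ z y) * q y z ∂lam)
            - pρ y / pμ y ^ 2 *
                ∫ z, (f z - f y) * q z y * g' (hastingsRatio q pμ y z) * pμ z ∂lam) ∂lam)
      (Set.Ici 0) 0 :=
  stmt_5_general lam V hV1 g g' hgpos hgbal hg' hg'b q hqm hqpos hqb pμ pν hpμm hpνm hpμpos hpνpos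
    hpμb hVμ hVν pρ hpρm hpρ0 hρμ f hfm hfV
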